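/- Let T_− < T_+ be real numbers and let ρ(y) = 1/(π √((y−T_−)(T_+−y))) for y ∈ (T_−, T_+). Then ρ satisfies the balance equation 2 ρ(y) = ∫_{T_−}^{y} ρ(x)/(T_+ − x) dx + ∫_{y}^{T_+} ρ(x)/(x − T_−) dx for every y ∈ (T_−, T_+); moreover ∫_{T_−}^{T_+} ρ(y) dy = 1. -/

import Mathlib

/-!
Everything is computed from explicit antiderivatives on `(a, b)`:
`arcsin ((2x - a - b) / (b - a)) / π` for `ρ`, and `2 / (π (b - a)) · √((x - a)(b - x)) / (b - x)`
for `ρ(x) / (b - x)`. The reflection `x ↦ a + b - x` preserves `ρ` and exchanges the two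
integrals of the balance equation, whose values at `y` then add up to
`2 / (π (b - a)) · (b - a) / √((y - a)(b - y)) = 2 ρ(y)`. The integrands have singularities at
the endpoints, but integrability comes for free because they are nonnegative derivatives.
-/

open MeasureTheory Real Set

theorem intervalIntegral.integral_eq_sub_of_hasDerivAt_of_nonneg {f f' : ℝ → ℝ} {a b : ℝ}
    (hab : a ≤ b) (hcont : ContinuousOn f (Icc a b))
    (hderiv : ∀ x ∈ Ioo a b, HasDerivAt f (f' x) x) (hpos : ∀ x ∈ Ioo a b, 0 ≤ f' x) :
    ∫ x in a..b, f' x = f b - f a :=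
  integral_eq_sub_of_hasDerivAt_of_le hab hcont hderiv <|
    (intervalIntegrable_iff_integrableOn_Ioc_of_le hab).2
      (integrableOn_deriv_of_nonneg hcont hderiv hpos)

noncomputable def arcsineDensity (a b x : ℝ) : ℝ := 1 / (π * √((x - a) * (b - x)))

namespace arcsineDensity

variable {a b x y : ℝ}

lemma nonneg (a b x : ℝ) : 0 ≤ arcsineDensity a b x := by
  unfold arcsineDensity; positivity

lemma reflect (a b x : ℝ) : arcsineDensity a b (a + b - x) = arcsineDensity a b x := by
  unfold arcsineDensity; ring_nf

lemma mul_sub_pos (hx : x ∈ Ioo a b) : 0 < (x - a) * (b - x) :=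
  mul_pos (sub_pos.2 hx.1) (sub_pos.2 hx.2)

lemma hasDerivAt_arcsin (hx : x ∈ Ioo a b) :
    HasDerivAt (fun x => arcsin ((2 * x - a - b) / (b - a)) / π) (arcsineDensity a b x) x := by
  have hq := mul_sub_pos hx
  obtain ⟨hax, hxb⟩ := hx
  have hba : 0 < b - a := by linarith
  set u := (2 * x - a - b) / (b - a)
  have hu1 : -1 < u := by rw [lt_div_iff₀ hba]; linarith
  have hu2 : u < 1 := by rw [div_lt_iff₀ hba]; linarith
  have hsqrt : √(1 - u ^ 2) = 2 * √((x - a) * (b - x)) / (b - a) := by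
    have hsq : 1 - u ^ 2 = (2 * √((x - a) * (b - x)) / (b - a)) ^ 2 := by
      rw [div_pow, div_pow, mul_pow, sq_sqrt hq.le]
      field_simp
      ring
    rw [hsq, sqrt_sq (by positivity)]
  have hinner : HasDerivAt (fun x => (2 * x - a - b) / (b - a)) (2 / (b - a)) x := by
    simpa using ((((hasDerivAt_id x).const_mul 2).sub_const a).sub_const b).div_const (b - a)
  refine (((Real.hasDerivAt_arcsin hu1.ne' hu2.ne).comp x hinner).div_const π).congr_deriv ?_
  have := sqrt_pos.2 hq
  rw [hsqrt, arcsineDensity]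
  field_simp

theorem integral_eq_one (hab : a < b) : ∫ x in a..b, arcsineDensity a b x = 1 := by
  have hba : b - a ≠ 0 := by linarith
  rw [intervalIntegral.integral_eq_sub_of_hasDerivAt_of_nonneg hab.le (by fun_prop)
    (fun x hx => hasDerivAt_arcsin hx) (fun x _ => nonneg a b x)]
  have hb : (2 * b - a - b) / (b - a) = 1 := by field_simp; ring
  have ha : (2 * a - a - b) / (b - a) = -1 := by field_simp; ring
  rw [hb, ha, arcsin_one, arcsin_neg_one]
  field_simp
  ring

lemma hasDerivAt_sqrt_div (hx : x ∈ Ioo a b) :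
    HasDerivAt (fun x => 2 / (π * (b - a)) * (√((x - a) * (b - x)) / (b - x)))
      (arcsineDensity a b x / (b - x)) x := by
  have hq := mul_sub_pos hx
  obtain ⟨hax, hxb⟩ := hx
  have hq' : HasDerivAt (fun x => (x - a) * (b - x)) (1 * (b - x) + (x - a) * (-1)) x :=
    ((hasDerivAt_id x).sub_const a).mul ((hasDerivAt_id x).const_sub b)
  refine (((hq'.sqrt hq.ne').div ((hasDerivAt_id x).const_sub b) (by simp; linarith)).const_mul
    _).congr_deriv ?_
  have hsq : √((x - a) * (b - x)) ^ 2 = (x - a) * (b - x) := sq_sqrt hq.le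
  have hs : 0 < √((x - a) * (b - x)) := sqrt_pos.2 hq
  have : b - a ≠ 0 := by linarith
  have : b - x ≠ 0 := by linarith
  simp only [id, arcsineDensity]
  generalize √((x - a) * (b - x)) = s at hs hsq ⊢
  field_simp
  linear_combination 2 * hsq

theorem integral_div_sub_left (hay : a ≤ y) (hyb : y < b) :
    ∫ x in a..y, arcsineDensity a b x / (b - x)
      = 2 / (π * (b - a)) * (√((y - a) * (b - y)) / (b - y)) := by
  have hcont : ContinuousOn (fun x => 2 / (π * (b - a)) * (√((x - a) * (b - x)) / (b - x)))
      (Icc a y) :=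
    continuousOn_const.mul <| (by fun_prop : Continuous _).continuousOn.div (by fun_prop)
      fun x hx => by linarith [hx.2]
  rw [intervalIntegral.integral_eq_sub_of_hasDerivAt_of_nonneg hay hcont
    (fun x hx => hasDerivAt_sqrt_div ⟨hx.1, hx.2.trans hyb⟩)
    (fun x hx => div_nonneg (nonneg a b x) (by linarith [hx.2]))]
  simp

theorem integral_div_sub_right (hay : a < y) (hyb : y ≤ b) :
    ∫ x in y..b, arcsineDensity a b x / (x - a)
      = 2 / (π * (b - a)) * (√((y - a) * (b - y)) / (y - a)) := by
  have hreflect : ∫ x in y..b, arcsineDensity a b x / (x - a)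
      = ∫ x in a..a + b - y, arcsineDensity a b x / (b - x) :=
    calc ∫ x in y..b, arcsineDensity a b x / (x - a)
        = ∫ x in a..a + b - y, arcsineDensity a b (a + b - x) / (a + b - x - a) := by
          rw [intervalIntegral.integral_comp_sub_left (fun x => arcsineDensity a b x / (x - a))]
          simp
      _ = ∫ x in a..a + b - y, arcsineDensity a b x / (b - x) := by
          simp only [reflect, show ∀ x, a + b - x - a = b - x from fun x => by ring]
  rw [hreflect, integral_div_sub_left (by linarith) (by linarith)]
  ring_nf

theorem balance (hy : y ∈ Ioo a b) :
    2 * arcsineDensity a b y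
      = (∫ x in a..y, arcsineDensity a b x / (b - x))
        + ∫ x in y..b, arcsineDensity a b x / (x - a) := by
  have hq := mul_sub_pos hy
  obtain ⟨hay, hyb⟩ := hy
  rw [integral_div_sub_left hay.le hyb, integral_div_sub_right hay hyb.le]
  have hs : 0 < √((y - a) * (b - y)) := sqrt_pos.2 hq
  have hsq : √((y - a) * (b - y)) ^ 2 = (y - a) * (b - y) := sq_sqrt hq.le
  have : b - a ≠ 0 := by linarith
  have : b - y ≠ 0 := by linarith
  have : y - a ≠ 0 := by linarith
  rw [arcsineDensity]
  generalize √((y - a) * (b - y)) = s at hs hsq ⊢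
  field_simp
  linear_combination (a - b) * hsq

end arcsineDensity

/-- the arcsine density `ρ(y) = 1/(π √((y−T₋)(T₊−y)))` satisfies the balance
equation `2ρ(y) = ∫_{T₋}^{y} ρ(x)/(T₊−x) dx + ∫_{y}^{T₊} ρ(x)/(x−T₋) dx` and is a
probability density on `[T₋, T₊]`. -/
theorem arcsine_balance_equation (Tm Tp : ℝ) (hT : Tm < Tp) :
    (∀ y ∈ Set.Ioo Tm Tp,
        2 * (1 / (Real.pi * Real.sqrt ((y - Tm) * (Tp - y))))
          = (∫ x in Tm..y, (1 / (Real.pi * Real.sqrt ((x - Tm) * (Tp - x)))) / (Tp - x))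
            + ∫ x in y..Tp, (1 / (Real.pi * Real.sqrt ((x - Tm) * (Tp - x)))) / (x - Tm))
    ∧ (∫ y in Tm..Tp, (1 / (Real.pi * Real.sqrt ((y - Tm) * (Tp - y))))) = 1 :=
  ⟨fun _ hy => arcsineDensity.balance hy, arcsineDensity.integral_eq_one hT⟩
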